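/- The bid–ask distance d is equivalent (within a factor 2) to the integral probability metric d̃ over differences of convex 1-Lipschitz functions: d(μ,ν) ≤ d̃(μ,ν) ≤ 2 d(μ,ν), where d̃(μ,ν) = sup { μ(ψ) − ν(ψ) : ψ = ψᵃ − ψᵇ with ψᵃ, ψᵇ convex and 1-Lipschitz }. -/

import Mathlib

open MeasureTheory Set Filter Topology
open scoped NNReal ENNReal

noncomputable section

/-- Linear growth on the nonnegative half-line. -/
def LinGrowth (f : ℝ → ℝ) : Prop := ∃ C : ℝ, ∀ x ≥ (0:ℝ), |f x| ≤ C * (1 + x)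

/-- A probability measure on ℝ supported on ℝ₊ with finite first moment. -/
def IsP1 (μ : Measure ℝ) : Prop :=
  IsProbabilityMeasure μ ∧ (∀ᵐ x ∂μ, 0 ≤ x) ∧ Integrable id μ

/-- Convex order: integrals of convex linear-growth test functions are ordered. -/
def CvxOrder (μ ν : Measure ℝ) : Prop :=
  ∀ ψ : ℝ → ℝ, ConvexOn ℝ (Ici (0:ℝ)) ψ → LinGrowth ψ →
    ∫ x, ψ x ∂μ ≤ ∫ x, ψ x ∂ν

/-- The directed bid–ask distance. -/
def dirDist (μ ν : Measure ℝ) : ℝ :=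
  sSup {r : ℝ | ∃ ψ : ℝ → ℝ, ConvexOn ℝ (Ici (0:ℝ)) ψ ∧
    LipschitzOnWith 1 ψ (Ici (0:ℝ)) ∧ r = ∫ x, ψ x ∂μ - ∫ x, ψ x ∂ν}

/-- The (symmetrized) bid–ask distance. -/
def baDist (μ ν : Measure ℝ) : ℝ := (dirDist μ ν + dirDist ν μ) / 2

/-- The integral probability metric over differences of convex 1-Lipschitz functions. -/
def tldDist (μ ν : Measure ℝ) : ℝ :=
  sSup {r : ℝ | ∃ ψa ψb : ℝ → ℝ,
    ConvexOn ℝ (Ici (0:ℝ)) ψa ∧ LipschitzOnWith 1 ψa (Ici (0:ℝ)) ∧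
    ConvexOn ℝ (Ici (0:ℝ)) ψb ∧ LipschitzOnWith 1 ψb (Ici (0:ℝ)) ∧
    r = ∫ x, (ψa x - ψb x) ∂μ - ∫ x, (ψa x - ψb x) ∂ν}

/-! Choosing `ψᵇ = 0` (or `ψᵃ = 0`, using the symmetry of `d̃`) shows that each directed distance
is at most `d̃`, hence so is their mean `d`. Conversely `μ(ψᵃ - ψᵇ) - ν(ψᵃ - ψᵇ)` splits as
`(μ(ψᵃ) - ν(ψᵃ)) + (ν(ψᵇ) - μ(ψᵇ)) ≤ d⃗(μ,ν) + d⃗(ν,μ) = 2d`. The analytic input is that a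
1-Lipschitz `ψ` on `ℝ₊` satisfies `|μ(ψ) - ψ 0| ≤ μ(x)`, which makes every supremum finite. -/

lemma LipschitzOnWith.abs_sub_apply_zero_le {K : ℝ≥0} {ψ : ℝ → ℝ}
    (h : LipschitzOnWith K ψ (Ici 0)) {x : ℝ} (hx : 0 ≤ x) : |ψ x - ψ 0| ≤ K * x := by
  simpa [Real.dist_eq, abs_of_nonneg hx] using
    h.dist_le_mul x (mem_Ici.2 hx) 0 (mem_Ici.2 le_rfl)

namespace IsP1

variable {μ ν : Measure ℝ} {K : ℝ≥0} {ψ : ℝ → ℝ}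

lemma integrable_of_lipschitzOnWith (hμ : IsP1 μ) (h : LipschitzOnWith K ψ (Ici 0)) :
    Integrable ψ μ := by
  have := hμ.1
  have hmeas : AEStronglyMeasurable ψ μ := by
    have hsupp : μ.restrict (Ici 0) = μ := Measure.restrict_eq_self_of_ae_mem hμ.2.1
    exact hsupp ▸ h.continuousOn.aestronglyMeasurable measurableSet_Ici
  refine Integrable.mono' ((integrable_const |ψ 0|).add (hμ.2.2.const_mul K)) hmeas ?_
  filter_upwards [hμ.2.1] with x hx
  have := h.abs_sub_apply_zero_le hx
  simp only [Real.norm_eq_abs, Pi.add_apply, id]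
  linarith [abs_sub_abs_le_abs_sub (ψ x) (ψ 0)]

lemma abs_integral_sub_apply_zero_le (hμ : IsP1 μ) (h : LipschitzOnWith K ψ (Ici 0)) :
    |∫ x, ψ x ∂μ - ψ 0| ≤ K * ∫ x, x ∂μ := by
  have := hμ.1
  have hint : ∫ x, (ψ x - ψ 0) ∂μ = ∫ x, ψ x ∂μ - ψ 0 := by
    simp [integral_sub (hμ.integrable_of_lipschitzOnWith h) (integrable_const _)]
  rw [← hint, ← integral_const_mul (K : ℝ) (fun x : ℝ => x)]
  refine norm_integral_le_of_norm_le (f := fun x => ψ x - ψ 0) (hμ.2.2.const_mul K) ?_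
  filter_upwards [hμ.2.1] with x hx
  exact h.abs_sub_apply_zero_le hx

lemma integral_sub_integral_le (hμ : IsP1 μ) (hν : IsP1 ν) (h : LipschitzOnWith K ψ (Ici 0)) :
    ∫ x, ψ x ∂μ - ∫ x, ψ x ∂ν ≤ K * ((∫ x, x ∂μ) + ∫ x, x ∂ν) := by
  have hμψ := (abs_le.1 (hμ.abs_integral_sub_apply_zero_le h)).2
  have hνψ := (abs_le.1 (hν.abs_integral_sub_apply_zero_le h)).1
  linarith

end IsP1

section Distances

variable {μ ν : Measure ℝ} {ψ ψa ψb : ℝ → ℝ}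

lemma convexOn_zero_lipschitzOnWith_one :
    ConvexOn ℝ (Ici (0:ℝ)) (fun _ : ℝ => (0:ℝ)) ∧ LipschitzOnWith 1 (fun _ : ℝ => (0:ℝ)) (Ici 0) :=
  ⟨convexOn_const 0 (convex_Ici 0), (LipschitzWith.const' 0).lipschitzOnWith⟩

lemma le_dirDist (hμ : IsP1 μ) (hν : IsP1 ν) (hc : ConvexOn ℝ (Ici 0) ψ)
    (hL : LipschitzOnWith 1 ψ (Ici 0)) : ∫ x, ψ x ∂μ - ∫ x, ψ x ∂ν ≤ dirDist μ ν := by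
  refine le_csSup ⟨(∫ x, x ∂μ) + ∫ x, x ∂ν, ?_⟩ ⟨ψ, hc, hL, rfl⟩
  rintro _ ⟨φ, -, hφ, rfl⟩
  simpa using hμ.integral_sub_integral_le hν hφ

lemma integral_sub_sub_integral_sub_le_dirDist_add (hμ : IsP1 μ) (hν : IsP1 ν)
    (hca : ConvexOn ℝ (Ici 0) ψa) (hLa : LipschitzOnWith 1 ψa (Ici 0))
    (hcb : ConvexOn ℝ (Ici 0) ψb) (hLb : LipschitzOnWith 1 ψb (Ici 0)) :
    ∫ x, (ψa x - ψb x) ∂μ - ∫ x, (ψa x - ψb x) ∂ν ≤ dirDist μ ν + dirDist ν μ := by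
  rw [integral_sub (hμ.integrable_of_lipschitzOnWith hLa) (hμ.integrable_of_lipschitzOnWith hLb),
    integral_sub (hν.integrable_of_lipschitzOnWith hLa) (hν.integrable_of_lipschitzOnWith hLb)]
  linarith [le_dirDist hμ hν hca hLa, le_dirDist hν hμ hcb hLb]

lemma tldDist_le_dirDist_add (hμ : IsP1 μ) (hν : IsP1 ν) :
    tldDist μ ν ≤ dirDist μ ν + dirDist ν μ := by
  obtain ⟨hc0, hL0⟩ := convexOn_zero_lipschitzOnWith_one
  refine csSup_le ⟨0, _, _, hc0, hL0, hc0, hL0, by simp⟩ ?_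
  rintro _ ⟨ψa, ψb, hca, hLa, hcb, hLb, rfl⟩
  exact integral_sub_sub_integral_sub_le_dirDist_add hμ hν hca hLa hcb hLb

lemma dirDist_le_tldDist (hμ : IsP1 μ) (hν : IsP1 ν) : dirDist μ ν ≤ tldDist μ ν := by
  obtain ⟨hc0, hL0⟩ := convexOn_zero_lipschitzOnWith_one
  refine csSup_le ⟨0, _, hc0, hL0, by simp⟩ ?_
  rintro _ ⟨ψ, hc, hL, rfl⟩
  have hbdd : BddAbove {r : ℝ | ∃ ψa ψb : ℝ → ℝ,
      ConvexOn ℝ (Ici (0:ℝ)) ψa ∧ LipschitzOnWith 1 ψa (Ici (0:ℝ)) ∧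
      ConvexOn ℝ (Ici (0:ℝ)) ψb ∧ LipschitzOnWith 1 ψb (Ici (0:ℝ)) ∧
      r = ∫ x, (ψa x - ψb x) ∂μ - ∫ x, (ψa x - ψb x) ∂ν} := by
    refine ⟨dirDist μ ν + dirDist ν μ, ?_⟩
    rintro _ ⟨ψa, ψb, hca, hLa, hcb, hLb, rfl⟩
    exact integral_sub_sub_integral_sub_le_dirDist_add hμ hν hca hLa hcb hLb
  exact le_csSup hbdd ⟨ψ, _, hc, hL, hc0, hL0, by simp⟩

lemma tldDist_comm (μ ν : Measure ℝ) : tldDist μ ν = tldDist ν μ := by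
  unfold tldDist
  congr 1
  ext r
  constructor <;> rintro ⟨ψa, ψb, hca, hLa, hcb, hLb, rfl⟩ <;>
    exact ⟨ψb, ψa, hcb, hLb, hca, hLa, by simp only [← neg_sub (ψa _), integral_neg]; ring⟩

end Distances

/-- `baDist` and `tldDist` are equivalent within a factor 2. -/
theorem baDist_equiv_tldDist (μ ν : Measure ℝ) (hμ : IsP1 μ) (hν : IsP1 ν) :
    baDist μ ν ≤ tldDist μ ν ∧ tldDist μ ν ≤ 2 * baDist μ ν := by
  have hμν := dirDist_le_tldDist hμ hν
  have hνμ : dirDist ν μ ≤ tldDist μ ν := tldDist_comm μ ν ▸ dirDist_le_tldDist hν hμ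
  have hsum := tldDist_le_dirDist_add hμ hν
  constructor <;> unfold baDist <;> linarith
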